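/- Let G be a discrete inverse semigroup. If G is E-continuous, then the groupoid (G * X)/≡ associated to G (with the quotient topology) is Hausdorff. -/

import Mathlib

/-- An inverse semigroup: a semigroup in which every element `g` has a unique
generalized inverse `star g`. -/
class InverseSemigroup (G : Type*) extends Semigroup G where
  star : G → G
  mul_star_mul : ∀ g : G, g * star g * g = g
  star_mul_star : ∀ g : G, star g * g * star g = star g
  star_unique : ∀ g h : G, g * h * g = g → h * g * h = h → h = star g

open InverseSemigroup

variable (G : Type*) [InverseSemigroup G]

/-- Idempotents of the inverse semigroup. -/
def IsIdem (e : G) : Prop := e * e = e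

/-- The character space `X` of `C*(E)`: nonzero `{0,1}`-valued multiplicative functions
on the semilattice `E` of idempotents, with the topology of pointwise convergence
(the Gelfand topology). A character `x` satisfies `x ∈ e` iff `x e = true`. -/
def SgChar : Type _ :=
  {x : G → Bool // (∀ e f : G, IsIdem G e → IsIdem G f → x (e * f) = (x e && x f)) ∧
    ∃ e : G, IsIdem G e ∧ x e = true}

instance : TopologicalSpace (SgChar G) :=
  TopologicalSpace.induced Subtype.val (by infer_instance : TopologicalSpace (G → Bool))

/-- The space `G * X = {(g, x) : x ∈ supp (1_{g* g})}`, topologized as a subspace of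
`G × X` with `G` discrete. -/
def GX : Type _ := {p : G × SgChar G // p.2.1 (star p.1 * p.1) = true}

instance : TopologicalSpace (GX G) :=
  TopologicalSpace.induced Subtype.val
    (@instTopologicalSpaceProd G (SgChar G) ⊥ inferInstance)

/-- The equivalence `(g, x) ≡ (h, y)` iff `x = y` and `g e = h e` for some idempotent
`e` with `x ∈ e`. -/
def gxRel (p q : GX G) : Prop :=
  p.1.2 = q.1.2 ∧ ∃ e : G, IsIdem G e ∧ p.1.2.1 e = true ∧ p.1.1 * e = q.1.1 * e

/-- The groupoid associated to the inverse semigroup `G`: the quotient `(G * X)/≡`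
with the quotient topology. -/
abbrev Gpd : Type _ := Quot (gxRel G)

/-- `E`-continuity of `G`: for every `g`, the pointwise supremum
`⋁ {1_e : e ∈ E, e ≤ g}` (the indicator of `{x : x e = true for some idempotent e ≤ g}`)
is a continuous function on `X`. -/
def EContinuous : Prop :=
  ∀ g : G, Continuous
    ({x : SgChar G | ∃ e : G, IsIdem G e ∧ e = g * e ∧ x.1 e = true}.indicator
      (fun _ => (1 : ℝ)))

/-!
The quotient map `G * X → (G * X)/≡` is open: if `g e = h e` with `x ∈ e`, then
`(g* g) e = (h* h) e`, so the germ of `h` at every point of a neighbourhood of `x` inside `e`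
is also a germ of `g` there. Hence the quotient is Hausdorff iff `≡` is closed in
`(G * X) × (G * X)`. For fixed arrows `g, h`, the relation `(g, x) ≡ (h, y)` says exactly
`x = y` and `x ∈ S (g* h)`, where `S k` is the support of `⋁ {1_e : e ≤ k}`: if `g e = h e`
then `g* h` fixes `e (g* g) ∋ x`, and conversely `g* h e = e` forces `g e = h e`. The space `X`
is Hausdorff and `E`-continuity makes every `S k` closed, so this is a closed condition.
-/

variable {G}

namespace InverseSemigroup

variable {e f g h : G}

theorem star_star (g : G) : star (star g) = g :=
  (star_unique (star g) g (star_mul_star g) (mul_star_mul g)).symm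

theorem mul_star_mul' (g : G) : g * (star g * g) = g := by
  rw [← mul_assoc, mul_star_mul]

theorem star_mul_star' (g : G) : star g * (g * star g) = star g := by
  rw [← mul_assoc, star_mul_star]

theorem mul_star_mul_assoc (g x : G) : g * (star g * (g * x)) = g * x := by
  rw [← mul_assoc, ← mul_assoc, mul_star_mul]

theorem star_mul_star_assoc (g x : G) : star g * (g * (star g * x)) = star g * x := by
  rw [← mul_assoc, ← mul_assoc, star_mul_star]

theorem _root_.IsIdem.mul_self_assoc (he : IsIdem G e) (x : G) : e * (e * x) = e * x := by
  rw [← mul_assoc, he]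

theorem _root_.IsIdem.star_eq (he : IsIdem G e) : star e = e := by
  have h : e * e * e = e := by rw [he, he]
  exact (star_unique e e h h).symm

theorem isIdem_star_mul (g : G) : IsIdem G (star g * g) := by
  rw [IsIdem, mul_assoc, ← mul_assoc g, mul_star_mul]

theorem isIdem_mul_star (g : G) : IsIdem G (g * star g) := by
  rw [IsIdem, ← mul_assoc, mul_star_mul]

theorem _root_.IsIdem.mul (he : IsIdem G e) (hf : IsIdem G f) : IsIdem G (e * f) := by
  set x := star (e * f) with hx
  have h₁ : e * (f * (x * (e * f))) = e * f := by
    simpa only [mul_assoc] using mul_star_mul (e * f)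
  have h₂ (y : G) : x * (e * (f * (x * y))) = x * y := by
    simpa only [mul_assoc] using congrArg (· * y) (star_mul_star (e * f))
  have hfxe : f * x * e = x := by
    refine (star_unique (e * f) _ ?_ ?_).trans hx.symm
    · simp only [mul_assoc, hf.mul_self_assoc, he.mul_self_assoc, h₁]
    · simp only [mul_assoc, hf.mul_self_assoc, he.mul_self_assoc, h₂]
  have hxx : IsIdem G x := by
    rw [IsIdem, ← hfxe]
    simp only [mul_assoc, h₂]
  rw [IsIdem, ← star_star (e * f), ← hx, hxx.star_eq, hxx]

theorem _root_.IsIdem.mul_comm (he : IsIdem G e) (hf : IsIdem G f) : e * f = f * e := by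
  have hef := he.mul hf
  have hfe := hf.mul he
  rw [IsIdem, mul_assoc] at hef hfe
  have hA : e * f * (f * e) * (e * f) = e * f := by
    simp only [mul_assoc, hf.mul_self_assoc, he.mul_self_assoc, hef]
  have hB : f * e * (e * f) * (f * e) = f * e := by
    simp only [mul_assoc, hf.mul_self_assoc, he.mul_self_assoc, hfe]
  rw [star_unique (e * f) (f * e) hA hB, (he.mul hf).star_eq]

theorem star_mul (g h : G) : star (g * h) = star h * star g := by
  have hc := (isIdem_mul_star h).mul_comm (isIdem_star_mul g)
  refine (star_unique (g * h) _ ?_ ?_).symm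
  · calc g * h * (star h * star g) * (g * h) = g * (h * star h * (star g * g)) * h := by
          simp only [mul_assoc]
      _ = g * h := by rw [hc]; simp only [mul_assoc, mul_star_mul_assoc, mul_star_mul']
  · calc star h * star g * (g * h) * (star h * star g)
          = star h * (star g * g * (h * star h)) * star g := by simp only [mul_assoc]
      _ = star h * star g := by
          rw [← hc]; simp only [mul_assoc, star_mul_star_assoc, star_mul_star']

theorem mul_eq_mul_of_eq_star_mul_mul (he : IsIdem G e) (hge : e = star g * h * e) :
    g * e = h * e := by
  have hke : e = e * (star h * g) := by
    simpa only [he.star_eq, star_mul, star_star, mul_assoc] using congrArg star hge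
  -- `u = h e h*` is idempotent and `h e = u g`, so `g e = g g* u g = u g g* g = u g = h e`.
  have hu : IsIdem G (h * e * star h) := by
    rw [IsIdem]
    calc h * e * star h * (h * e * star h) = h * (e * (star h * h) * e) * star h := by
          simp only [mul_assoc]
      _ = h * e * star h := by
          rw [he.mul_comm (isIdem_star_mul h)]
          simp only [mul_assoc, mul_star_mul_assoc, he.mul_self_assoc]
  have hhe : h * e = h * e * star h * g := by
    conv_lhs => rw [hke]
    simp only [mul_assoc]
  calc g * e = g * star g * (h * e) := by (conv_lhs => rw [hge]); simp only [mul_assoc]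
    _ = g * star g * (h * e * star h) * g := by (conv_lhs => rw [hhe]); simp only [mul_assoc]
    _ = h * e * star h * (g * star g * g) := by
          rw [(isIdem_mul_star g).mul_comm hu]; simp only [mul_assoc]
    _ = h * e := by rw [mul_star_mul, ← hhe]

theorem star_mul_mul_eq_of_mul_eq_mul (he : IsIdem G e) (hge : g * e = h * e) :
    star g * h * (e * (star g * g)) = e * (star g * g) := by
  calc star g * h * (e * (star g * g)) = star g * (g * e) * (star g * g) := by
        rw [hge]; simp only [mul_assoc]
    _ = star g * g * e * (star g * g) := by simp only [mul_assoc]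
    _ = e * (star g * g) := by
        rw [(isIdem_star_mul g).mul_comm he, mul_assoc, isIdem_star_mul g]

theorem star_mul_self_mul_eq_of_mul_eq_mul (he : IsIdem G e) (hge : g * e = h * e) :
    star g * g * e = star h * h * e := by
  have key (c : G) : star (c * e) * (c * e) = star c * c * e := by
    rw [star_mul, he.star_eq, mul_assoc, ← mul_assoc (star c), ← mul_assoc,
      he.mul_comm (isIdem_star_mul c), mul_assoc, he]
  rw [← key, ← key, hge]

end InverseSemigroup

theorem SgChar.apply_mul_eq_true (x : SgChar G) {e f : G} (he : IsIdem G e) (hf : IsIdem G f) :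
    x.1 (e * f) = true ↔ x.1 e = true ∧ x.1 f = true := by
  rw [x.2.1 e f he hf, Bool.and_eq_true]

instance : T2Space (SgChar G) :=
  Topology.IsEmbedding.subtypeVal.t2Space

variable (G) in
/-- The support of `⋁ {1_e : e ∈ E, e ≤ g}`, with `e ≤ g` meaning `e = g e`. -/
def supportBelow (g : G) : Set (SgChar G) :=
  {x | ∃ e, IsIdem G e ∧ e = g * e ∧ x.1 e = true}

theorem EContinuous.isClosed_supportBelow (hG : EContinuous G) (g : G) :
    IsClosed (supportBelow G g) := by
  have : supportBelow G g = (supportBelow G g).indicator (fun _ => (1 : ℝ)) ⁻¹' {1} := by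
    ext x
    by_cases hx : x ∈ supportBelow G g <;> simp [hx]
  rw [this]
  exact isClosed_singleton.preimage (hG g)

theorem GX.continuous_char : Continuous fun a : GX G => a.1.2 :=
  letI : TopologicalSpace G := ⊥
  continuous_snd.comp continuous_induced_dom

theorem SgChar.isOpen_setOf_apply_eq_true (e : G) : IsOpen {x : SgChar G | x.1 e = true} := by
  have : Continuous fun x : SgChar G => x.1 e := (continuous_apply e).comp continuous_induced_dom
  exact this.isOpen_preimage {true} (isOpen_discrete _)

theorem GX.isOpen_setOf_fst_eq (g : G) : IsOpen {a : GX G | a.1.1 = g} := by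
  let _ : TopologicalSpace G := ⊥
  have : DiscreteTopology G := ⟨rfl⟩
  exact (continuous_fst.comp continuous_induced_dom).isOpen_preimage _ (isOpen_discrete {g})

theorem GX.exists_isOpen_slice_subset {U : Set (GX G)} (hU : IsOpen U) {p : GX G} (hp : p ∈ U) :
    ∃ W : Set (SgChar G), IsOpen W ∧ p.1.2 ∈ W ∧
      {a : GX G | a.1.1 = p.1.1 ∧ a.1.2 ∈ W} ⊆ U := by
  let _ : TopologicalSpace G := ⊥
  obtain ⟨V, hV, rfl⟩ := isOpen_induced_iff.mp hU
  refine ⟨{x | (p.1.1, x) ∈ V}, hV.preimage (Continuous.prodMk_right _), hp, ?_⟩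
  rintro ⟨⟨g, x⟩, _⟩ ⟨rfl, hx⟩
  exact hx

theorem gxRel_equivalence : Equivalence (gxRel G) where
  refl p := ⟨rfl, star p.1.1 * p.1.1, isIdem_star_mul _, p.2, rfl⟩
  symm := fun ⟨hx, e, he, hxe, hge⟩ => ⟨hx.symm, e, he, hx ▸ hxe, hge.symm⟩
  trans := by
    rintro p q r ⟨hx₁, e₁, he₁, hxe₁, hge₁⟩ ⟨hx₂, e₂, he₂, hxe₂, hge₂⟩
    refine ⟨hx₁.trans hx₂, e₁ * e₂, he₁.mul he₂,
      (p.1.2.apply_mul_eq_true he₁ he₂).2 ⟨hxe₁, hx₁ ▸ hxe₂⟩, ?_⟩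
    calc p.1.1 * (e₁ * e₂) = q.1.1 * (e₂ * e₁) := by
          rw [← mul_assoc, hge₁, mul_assoc, he₁.mul_comm he₂]
      _ = r.1.1 * (e₁ * e₂) := by rw [← mul_assoc, hge₂, mul_assoc, he₂.mul_comm he₁]

theorem gxRel_iff {p q : GX G} :
    gxRel G p q ↔ p.1.2 = q.1.2 ∧ p.1.2 ∈ supportBelow G (star p.1.1 * q.1.1) := by
  constructor
  · rintro ⟨hx, e, he, hxe, hge⟩
    exact ⟨hx, e * (star p.1.1 * p.1.1), he.mul (isIdem_star_mul _),
      (star_mul_mul_eq_of_mul_eq_mul he hge).symm,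
      (p.1.2.apply_mul_eq_true he (isIdem_star_mul _)).2 ⟨hxe, p.2⟩⟩
  · rintro ⟨hx, e, he, hge, hxe⟩
    exact ⟨hx, e, he, hxe, mul_eq_mul_of_eq_star_mul_mul he hge⟩

theorem isOpenQuotientMap_quot_mk_gxRel : IsOpenQuotientMap (Quot.mk (gxRel G)) := by
  refine ⟨Quot.mk_surjective, continuous_quot_mk, fun U hU => ?_⟩
  rw [← isQuotientMap_quot_mk.isOpen_preimage, isOpen_iff_forall_mem_open]
  rintro q ⟨p, hpU, hpq⟩
  obtain ⟨hx, e, he, hxe, hge⟩ := (gxRel_equivalence.quot_mk_eq_iff _ _).1 hpq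
  obtain ⟨W, hW, hpW, hWU⟩ := GX.exists_isOpen_slice_subset hU hpU
  refine ⟨{a | a.1.1 = q.1.1} ∩ (fun a => a.1.2) ⁻¹' (W ∩ {x | x.1 e = true}), ?_,
    (GX.isOpen_setOf_fst_eq _).inter
      (GX.continuous_char.isOpen_preimage _ (hW.inter (SgChar.isOpen_setOf_apply_eq_true e))),
    rfl, show q.1.2 ∈ W from hx ▸ hpW, show q.1.2.1 e = true from hx ▸ hxe⟩
  rintro a ⟨ha, haW, hae⟩
  have hdom : a.1.2.1 (star p.1.1 * p.1.1) = true := by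
    have hae' := (a.1.2.apply_mul_eq_true (isIdem_star_mul _) he).2 ⟨a.2, hae⟩
    rw [ha, ← star_mul_self_mul_eq_of_mul_eq_mul he hge] at hae'
    exact ((a.1.2.apply_mul_eq_true (isIdem_star_mul _) he).1 hae').1
  exact ⟨⟨(p.1.1, a.1.2), hdom⟩, hWU ⟨rfl, haW⟩,
    Quot.sound ⟨rfl, e, he, hae, ha ▸ hge⟩⟩

theorem isClosed_setOf_gxRel (hG : EContinuous G) :
    IsClosed {c : GX G × GX G | gxRel G c.1 c.2} := by
  simp only [gxRel_iff]
  rw [← isOpen_compl_iff, isOpen_iff_mem_nhds]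
  rintro ⟨p, q⟩ hpq
  have hO : IsOpen {y : SgChar G × SgChar G |
      y.1 = y.2 ∧ y.1 ∈ supportBelow G (star p.1.1 * q.1.1)}ᶜ :=
    (isClosed_diagonal.inter ((hG.isClosed_supportBelow _).preimage continuous_fst)).isOpen_compl
  have hchar : Continuous fun c : GX G × GX G => (c.1.1.2, c.2.1.2) :=
    (GX.continuous_char.comp continuous_fst).prodMk (GX.continuous_char.comp continuous_snd)
  filter_upwards [prod_mem_nhds ((GX.isOpen_setOf_fst_eq p.1.1).mem_nhds rfl)
    ((GX.isOpen_setOf_fst_eq q.1.1).mem_nhds rfl), hchar.continuousAt (hO.mem_nhds hpq)]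
    with c ⟨h₁, h₂⟩ hc
  rw [Set.mem_ofPred_eq] at h₁ h₂
  simpa [h₁, h₂] using hc

/-- If a discrete inverse semigroup `G` is `E`-continuous, then its associated groupoid
`(G * X)/≡` (with the quotient topology) is Hausdorff. -/
theorem stmt15 {G : Type*} [InverseSemigroup G] (h : EContinuous G) :
    T2Space (Gpd G) := by
  rw [t2Space_iff_of_isOpenQuotientMap isOpenQuotientMap_quot_mk_gxRel]
  simpa only [gxRel_equivalence.quot_mk_eq_iff] using isClosed_setOf_gxRel h
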